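/- (Convergence of the embedded approximate tree state in the infinite-degree limit.) Fix p ≥ 1, angles γ, β ∈ ℝ^p, and sequences of complex p×p matrices G_D (Hermitian-symmetric data G_D = (G_{D;j,k})) and L_D converging entrywise as D → ∞ to matrices G and L respectively. For each D, define the coefficient family c_D : {±1} × ℕ^p → ℂ by c_D(a_{p+1}, (n_1,…,n_p)) := Σ_{(a_1,…,a_p) ∈ {±1}^p} f_{1:p+1}(a_1,…,a_{p+1}) · exp(−(1/2) Σ_{l,m=1}^{p} G_{D;l,m} γ_l γ_m a_l a_m) · D^{−(Σ_l n_l)/2} · √( D! / ((D − Σ_l n_l)! ∏_l n_l!) ) · ∏_{l=1}^{p} ( −i Σ_{t=1}^{p} L_{D;l,t} γ_t a_t )^{n_l} whenever Σ_l n_l ≤ D, and c_D(a_{p+1}, n) := 0 otherwise; define the limiting family c : {±1} × ℕ^p → ℂ by c(a_{p+1}, (n_1,…,n_p)) := Σ_{(a_1,…,a_p) ∈ {±1}^p} f_{1:p+1}(a_1,…,a_{p+1}) · exp(−(1/2) Σ_{l,m=1}^{p} G_{l,m} γ_l γ_m a_l a_m) · ∏_{l=1}^{p} (1/√(n_l!))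 · ( −i Σ_{t=1}^{p} L_{l,t} γ_t a_t )^{n_l}. Then: (i) for every fixed (a_{p+1}, n) ∈ {±1} × ℕ^p, c_D(a_{p+1}, n) → c(a_{p+1}, n) as D → ∞; and (ii) if moreover Σ_{(a,n)} |c(a,n)|² = 1 and Σ_{(a,n)} |c_D(a,n)|² → 1 as D → ∞, then c_D → c in ℓ²({±1} × ℕ^p), i.e. Σ_{(a,n)} |c_D(a,n) − c(a,n)|² → 0. -/

import Mathlib

open scoped BigOperators ENNReal

noncomputable section

/-- The single-qubit `X`-rotation matrix element
`⟨a|e^{iθX}|b⟩ = cos θ` if `a = b` and `i sin θ` otherwise, for `a, b ∈ {±1}`. -/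
def braXket (θ : ℝ) (a b : ℤ) : ℂ :=
  if a = b then (Real.cos θ : ℂ) else Complex.I * (Real.sin θ : ℂ)

/-- The value (in `{±1} ⊆ ℤ`) of the `1`-indexed bit `a_t` of a bitstring `a`. -/
def bitVal {n : ℕ} (a : Fin n → ℤˣ) (t : ℕ) : ℤ :=
  if h : t - 1 < n then (a ⟨t - 1, h⟩ : ℤ) else 1

/-- The one-sided `f` tensor
`f_{1:p+1}(a_1,…,a_{p+1}) = (1/√2) ∏_{t=1}^p ⟨a_{t+1}|e^{−iβ_t X}|a_t⟩`. -/
def fOne (p : ℕ) (β : ℕ → ℝ) (a : Fin (p + 1) → ℤˣ) : ℂ :=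
  ((Real.sqrt 2 : ℂ))⁻¹ *
    ∏ t ∈ Finset.Icc 1 p, braXket (-β t) (bitVal a (t + 1)) (bitVal a t)

/-- The degree-`D` coefficient family
`c_D(a_{p+1}, n) = Σ_{a_{1:p}} f_{1:p+1}(a) exp(−(1/2) Σ G_{D;l,m} γ_l γ_m a_l a_m) ·
D^{−(Σn)/2} √(D!/((D−Σn)! ∏ n_l!)) ∏_l (−i Σ_t L_{D;l,t} γ_t a_t)^{n_l}` for `Σ n ≤ D`
and `0` otherwise. -/
def cD (p : ℕ) (γ β : ℕ → ℝ) (GD LD : Matrix (Fin p) (Fin p) ℂ) (D : ℕ)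
    (s : ℤˣ) (n : Fin p → ℕ) : ℂ :=
  if (∑ l, n l) ≤ D then
    ∑ b : Fin p → ℤˣ,
      fOne p β (Fin.snoc b s) *
        Complex.exp (-(1 / 2 : ℂ) *
          ∑ l : Fin p, ∑ m : Fin p,
            GD l m * (γ ((l : ℕ) + 1) : ℂ) * (γ ((m : ℕ) + 1) : ℂ) * ((b l : ℤ) : ℂ) *
              ((b m : ℤ) : ℂ)) *
        (((D : ℝ) ^ (-((∑ l, n l : ℕ) : ℝ) / 2) : ℝ) : ℂ) *
        ((Real.sqrt ((D.factorial : ℝ) /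
            (((D - ∑ l, n l).factorial : ℝ) * ∏ l, ((n l).factorial : ℝ))) : ℝ) : ℂ) *
        ∏ l : Fin p,
          (-Complex.I *
              ∑ t : Fin p, LD l t * (γ ((t : ℕ) + 1) : ℂ) * ((b t : ℤ) : ℂ)) ^ n l
  else 0

/-- The limiting (spin-boson Fock state) coefficient family
`c(a_{p+1}, n) = Σ_{a_{1:p}} f_{1:p+1}(a) exp(−(1/2) Σ G_{l,m} γ_l γ_m a_l a_m) ·
∏_l (1/√(n_l!)) (−i Σ_t L_{l,t} γ_t a_t)^{n_l}`. -/
def cLim (p : ℕ) (γ β : ℕ → ℝ) (G L : Matrix (Fin p) (Fin p) ℂ)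
    (s : ℤˣ) (n : Fin p → ℕ) : ℂ :=
  ∑ b : Fin p → ℤˣ,
    fOne p β (Fin.snoc b s) *
      Complex.exp (-(1 / 2 : ℂ) *
        ∑ l : Fin p, ∑ m : Fin p,
          G l m * (γ ((l : ℕ) + 1) : ℂ) * (γ ((m : ℕ) + 1) : ℂ) * ((b l : ℤ) : ℂ) *
            ((b m : ℤ) : ℂ)) *
      ∏ l : Fin p,
        ((Real.sqrt ((n l).factorial : ℝ) : ℂ))⁻¹ *
          (-Complex.I *
              ∑ t : Fin p, L l t * (γ ((t : ℕ) + 1) : ℂ) * ((b t : ℤ) : ℂ)) ^ n l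

/-! For `∑ n ≤ D`, `c_D` is the limiting coefficient `c` evaluated at `(G_D, L_D)` instead of
`(G, L)`, multiplied by `D^{-N/2} √(D!/(D-N)!)` with `N = ∑ n`; this factor tends to `1` because
`D!/(D-N)! ~ D^N`, and `c` is continuous in `(G, L)`, which gives (i).

Part (ii) is the `ℓ²` fact that pointwise convergence and convergence of norms give convergence in
norm: by the parallelogram law `‖c_D - c‖² + ‖c_D + c‖² = 2‖c_D‖² + 2‖c‖² → 4`, while Fatou's
lemma gives `liminf ‖c_D + c‖² ≥ ‖2c‖² = 4`. -/

open Filter Topology Asymptotics Nat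
open scoped NNReal

theorem tendsto_descFactorial_div_pow (N : ℕ) :
    Tendsto (fun D : ℕ => (D.descFactorial N : ℝ) / (D : ℝ) ^ N) atTop (𝓝 1) := by
  have hz : ∀ᶠ D : ℕ in atTop, (D : ℝ) ^ N ≠ 0 :=
    eventually_atTop.mpr ⟨1, fun D hD => pow_ne_zero _ (by positivity)⟩
  exact (isEquivalent_iff_tendsto_one hz).mp (isEquivalent_descFactorial N)

theorem rpow_neg_half_mul_sqrt_eq_sqrt_div_pow (x : ℝ) {y : ℝ} (hy : 0 ≤ y) (N : ℕ) :
    y ^ (-(N : ℝ) / 2) * √x = √(x / y ^ N) := by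
  have hsqrt : √(y ^ N) = y ^ ((N : ℝ) / 2) := by
    rw [Real.sqrt_eq_rpow, ← Real.rpow_natCast, ← Real.rpow_mul hy]
    ring_nf
  rw [Real.sqrt_div' _ (pow_nonneg hy N), hsqrt, neg_div, Real.rpow_neg hy, inv_mul_eq_div]

theorem tendsto_rpow_neg_half_mul_sqrt_descFactorial (N : ℕ) :
    Tendsto (fun D : ℕ => (D : ℝ) ^ (-(N : ℝ) / 2) * √(D.descFactorial N : ℝ)) atTop (𝓝 1) := by
  simp_rw [rpow_neg_half_mul_sqrt_eq_sqrt_div_pow _ (Nat.cast_nonneg _)]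
  simpa using (tendsto_descFactorial_div_pow N).sqrt

theorem sqrt_factorial_div_factorial_sub_mul {D N : ℕ} (h : N ≤ D) (P : ℝ) :
    √((D ! : ℝ) / ((D - N)! * P)) = √(D.descFactorial N : ℝ) * (√P)⁻¹ := by
  rw [← Nat.factorial_mul_descFactorial h, Nat.cast_mul, mul_div_mul_left _ _ (by positivity),
    Real.sqrt_div (Nat.cast_nonneg _), div_eq_mul_inv]

theorem cD_eq_mul_cLim (p : ℕ) (γ β : ℕ → ℝ) (G L : Matrix (Fin p) (Fin p) ℂ) {D : ℕ}
    (s : ℤˣ) {n : Fin p → ℕ} (hn : ∑ l, n l ≤ D) :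
    cD p γ β G L D s n = (((D : ℝ) ^ (-((∑ l, n l : ℕ) : ℝ) / 2) *
      √(D.descFactorial (∑ l, n l) : ℝ) : ℝ) : ℂ) * cLim p γ β G L s n := by
  have hsqrt :
      ((Real.sqrt (∏ l, ((n l)! : ℝ)) : ℂ))⁻¹ = ∏ l, ((Real.sqrt ((n l)! : ℝ) : ℂ))⁻¹ := by
    rw [Real.sqrt_prod _ fun l _ => Nat.cast_nonneg _]
    push_cast
    rw [Finset.prod_inv_distrib]
  rw [cD, if_pos hn, cLim, Finset.mul_sum]
  refine Finset.sum_congr rfl fun b _ => ?_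
  rw [sqrt_factorial_div_factorial_sub_mul hn, Finset.prod_mul_distrib, ← hsqrt]
  push_cast
  ring

theorem continuous_cLim (p : ℕ) (γ β : ℕ → ℝ) (s : ℤˣ) (n : Fin p → ℕ) :
    Continuous (Function.uncurry fun G L => cLim p γ β G L s n) := by
  unfold cLim
  fun_prop

theorem tendsto_cD (p : ℕ) (γ β : ℕ → ℝ)
    {GD LD : ℕ → Matrix (Fin p) (Fin p) ℂ} {G L : Matrix (Fin p) (Fin p) ℂ}
    (hG : Tendsto GD atTop (𝓝 G)) (hL : Tendsto LD atTop (𝓝 L)) (s : ℤˣ) (n : Fin p → ℕ) :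
    Tendsto (fun D => cD p γ β (GD D) (LD D) D s n) atTop (𝓝 (cLim p γ β G L s n)) := by
  have hscale := (Complex.continuous_ofReal.tendsto 1).comp
    (tendsto_rpow_neg_half_mul_sqrt_descFactorial (∑ l, n l))
  have hcLim := ((continuous_cLim p γ β s n).tendsto (G, L)).comp (hG.prodMk_nhds hL)
  have hprod := hscale.mul hcLim
  rw [Complex.ofReal_one, one_mul] at hprod
  refine hprod.congr' ?_
  filter_upwards [eventually_ge_atTop (∑ l, n l)] with D hD
  exact (cD_eq_mul_cLim p γ β _ _ s hD).symm

section ParallelogramFatou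

variable {ι α E : Type*} [NormedAddCommGroup E] [InnerProductSpace ℝ E]

theorem tsum_nnnorm_add_sq_add_tsum_nnnorm_sub_sq (u v : α → E) :
    ∑' x, (‖u x + v x‖₊ : ℝ≥0∞) ^ 2 + ∑' x, (‖u x - v x‖₊ : ℝ≥0∞) ^ 2 =
      2 * (∑' x, (‖u x‖₊ : ℝ≥0∞) ^ 2 + ∑' x, (‖v x‖₊ : ℝ≥0∞) ^ 2) := by
  rw [← ENNReal.tsum_add, ← ENNReal.tsum_add, ← ENNReal.tsum_mul_left]
  refine tsum_congr fun x => ?_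
  exact_mod_cast congrArg ((↑) : ℝ≥0 → ℝ≥0∞) (parallelogram_law_with_nnnorm ℝ (u x) (v x))

theorem ENNReal.tsum_le_liminf_tsum {l : Filter ι} [l.NeBot] {f : ι → α → ℝ≥0∞}
    {g : α → ℝ≥0∞} (h : ∀ x, Tendsto (fun i => f i x) l (𝓝 (g x))) :
    ∑' x, g x ≤ liminf (fun i => ∑' x, f i x) l := by
  rw [ENNReal.tsum_eq_iSup_sum]
  refine iSup_le fun s => ?_
  rw [← (tendsto_finsetSum s fun x _ => h x).liminf_eq]
  exact liminf_le_liminf (Eventually.of_forall fun i => ENNReal.sum_le_tsum s)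

theorem tendsto_tsum_nnnorm_sub_sq_of_tendsto {l : Filter ι} [l.NeBot] {u : ι → α → E}
    {v : α → E} {A : ℝ≥0∞} (hA : A ≠ ⊤) (hpt : ∀ x, Tendsto (fun i => u i x) l (𝓝 (v x)))
    (hv : ∑' x, (‖v x‖₊ : ℝ≥0∞) ^ 2 = A)
    (hu : Tendsto (fun i => ∑' x, (‖u i x‖₊ : ℝ≥0∞) ^ 2) l (𝓝 A)) :
    Tendsto (fun i => ∑' x, (‖u i x - v x‖₊ : ℝ≥0∞) ^ 2) l (𝓝 0) := by
  set S := fun i => ∑' x, (‖u i x + v x‖₊ : ℝ≥0∞) ^ 2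
  set T := fun i => 2 * (∑' x, (‖u i x‖₊ : ℝ≥0∞) ^ 2 + A)
  have hST : ∀ i, S i + ∑' x, (‖u i x - v x‖₊ : ℝ≥0∞) ^ 2 = T i := fun i => by
    simpa only [S, T, hv] using tsum_nnnorm_add_sq_add_tsum_nnnorm_sub_sq (u i) v
  have h4A : 4 * A ≠ ⊤ := ENNReal.mul_ne_top (by norm_num) hA
  have hT : Tendsto T l (𝓝 (4 * A)) := by
    have := ENNReal.Tendsto.const_mul (hu.add_const A) (Or.inr (by norm_num : (2 : ℝ≥0∞) ≠ ⊤))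
    rwa [← two_mul, ← mul_assoc, show (2 * 2 : ℝ≥0∞) = 4 by norm_num] at this
  have hS_liminf : 4 * A ≤ liminf S l := by
    have hpt' : ∀ x, Tendsto (fun i => (‖u i x + v x‖₊ : ℝ≥0∞) ^ 2) l
        (𝓝 (4 * (‖v x‖₊ : ℝ≥0∞) ^ 2)) := fun x => by
      have hnorm := ENNReal.tendsto_coe.2 ((hpt x).add_const (v x)).nnnorm
      convert ENNReal.Tendsto.pow (n := 2) hnorm using 2
      rw [← two_smul ℝ, nnnorm_smul, Real.nnnorm_two]
      push_cast
      ring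
    simpa only [ENNReal.tsum_mul_left, hv] using ENNReal.tsum_le_liminf_tsum hpt'
  have hS_limsup : limsup S l ≤ 4 * A :=
    (limsup_le_limsup (Eventually.of_forall fun i => (hST i).le.trans' le_self_add)).trans
      hT.limsup_eq.le
  have hS := tendsto_of_le_liminf_of_limsup_le hS_liminf hS_limsup
  have hTS := ENNReal.Tendsto.sub hT hS (Or.inl h4A)
  rw [tsub_self] at hTS
  refine hTS.congr' ?_
  filter_upwards [hT.eventually_ne h4A] with i hi
  have hSi : S i ≠ ⊤ := ne_top_of_le_ne_top hi (le_self_add.trans_eq (hST i))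
  exact (ENNReal.eq_sub_of_add_eq hSi ((add_comm _ _).trans (hST i))).symm

end ParallelogramFatou

theorem stmt18_general (p : ℕ) (γ β : ℕ → ℝ)
    (GD LD : ℕ → Matrix (Fin p) (Fin p) ℂ) (G L : Matrix (Fin p) (Fin p) ℂ)
    (hG : ∀ j k, Filter.Tendsto (fun D => GD D j k) Filter.atTop (nhds (G j k)))
    (hL : ∀ j k, Filter.Tendsto (fun D => LD D j k) Filter.atTop (nhds (L j k))) :
    (∀ (s : ℤˣ) (n : Fin p → ℕ),
        Filter.Tendsto (fun D : ℕ => cD p γ β (GD D) (LD D) D s n) Filter.atTop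
          (nhds (cLim p γ β G L s n))) ∧
      ((∑' x : ℤˣ × (Fin p → ℕ), (‖cLim p γ β G L x.1 x.2‖₊ : ℝ≥0∞) ^ 2) = 1 →
        Filter.Tendsto
          (fun D : ℕ =>
            ∑' x : ℤˣ × (Fin p → ℕ), (‖cD p γ β (GD D) (LD D) D x.1 x.2‖₊ : ℝ≥0∞) ^ 2)
          Filter.atTop (nhds 1) →
        Filter.Tendsto
          (fun D : ℕ =>
            ∑' x : ℤˣ × (Fin p → ℕ),
              (‖cD p γ β (GD D) (LD D) D x.1 x.2 - cLim p γ β G L x.1 x.2‖₊ : ℝ≥0∞) ^ 2)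
          Filter.atTop (nhds 0))
  := by
  have hGD : Tendsto GD atTop (𝓝 G) := tendsto_pi_nhds.2 fun j => tendsto_pi_nhds.2 (hG j)
  have hLD : Tendsto LD atTop (𝓝 L) := tendsto_pi_nhds.2 fun j => tendsto_pi_nhds.2 (hL j)
  have hpt := tendsto_cD p γ β hGD hLD
  exact ⟨hpt, fun hc hcD =>
    tendsto_tsum_nnnorm_sub_sq_of_tendsto ENNReal.one_ne_top (fun x => hpt x.1 x.2) hc hcD⟩

/-- Convergence of the embedded approximate tree state in the
infinite-degree limit: if `G_D → G` and `L_D → L` entrywise, then (i) the coefficients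
`c_D(a_{p+1}, n)` converge pointwise to the limiting Fock coefficients `c(a_{p+1}, n)`;
and (ii) if moreover `Σ |c|² = 1` and `Σ |c_D|² → 1`, then `c_D → c` in
`ℓ²({±1} × ℕ^p)`. -/
theorem stmt18 (p : ℕ) (hp : 1 ≤ p) (γ β : ℕ → ℝ)
    (GD LD : ℕ → Matrix (Fin p) (Fin p) ℂ) (G L : Matrix (Fin p) (Fin p) ℂ)
    (hG : ∀ j k, Filter.Tendsto (fun D => GD D j k) Filter.atTop (nhds (G j k)))
    (hL : ∀ j k, Filter.Tendsto (fun D => LD D j k) Filter.atTop (nhds (L j k))) :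
    (∀ (s : ℤˣ) (n : Fin p → ℕ),
        Filter.Tendsto (fun D : ℕ => cD p γ β (GD D) (LD D) D s n) Filter.atTop
          (nhds (cLim p γ β G L s n))) ∧
      ((∑' x : ℤˣ × (Fin p → ℕ), (‖cLim p γ β G L x.1 x.2‖₊ : ℝ≥0∞) ^ 2) = 1 →
        Filter.Tendsto
          (fun D : ℕ =>
            ∑' x : ℤˣ × (Fin p → ℕ), (‖cD p γ β (GD D) (LD D) D x.1 x.2‖₊ : ℝ≥0∞) ^ 2)
          Filter.atTop (nhds 1) →
        Filter.Tendsto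
          (fun D : ℕ =>
            ∑' x : ℤˣ × (Fin p → ℕ),
              (‖cD p γ β (GD D) (LD D) D x.1 x.2 - cLim p γ β G L x.1 x.2‖₊ : ℝ≥0∞) ^ 2)
          Filter.atTop (nhds 0)) :=
  stmt18_general p γ β GD LD G L hG hL

end
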